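/- arXiv:2202.08658 — 5 statements merged into one kernel-verified Lean document; each statement's English description precedes it below -/
import Mathlib

section
/- Let $\mathcal{R}$ be a real Hilbert space and $f_1,\ldots,f_M \in \mathcal{R}$ with $\|f_i\| = 1$ for all $i$. Let $\mathcal{T} \subseteq \mathcal{R}$ be a finite-dimensional linear subspace with $r = \dim(\mathcal{T})$, and set $\varepsilon = \frac{1}{M}\sum_{i=1}^M \inf_{g \in \mathcal{T}} \|g - f_i\|^2$. Then $r \ge \frac{M}{\|G\|_{\mathrm{op}}}(1-\varepsilon)$, where $G = (\langle f_i, f_j\rangle)_{i,j\in[M]}$ is the Gram matrix and $\|G\|_{\mathrm{op}}$ its operator norm. -/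
open scoped RealInnerProductSpace

set_option maxHeartbeats 1000000 in
/-- Dimension lower bound: if `f 1, …, f M` are unit vectors in a real Hilbert space,
`T` is a finite-dimensional subspace with `r = dim T`, and
`ε = (1/M) ∑ i, inf_{g ∈ T} ‖g - f i‖²` is the average approximation error, then
`r ≥ (M / ‖G‖_op) (1 - ε)` where `G` is the Gram matrix of the `f i`. -/
theorem dimension_lower_bound
    {R : Type*} [NormedAddCommGroup R] [InnerProductSpace ℝ R] [CompleteSpace R]
    (M : ℕ) (f : Fin M → R) (hf : ∀ i, ‖f i‖ = 1)
    (T : Submodule ℝ R) [FiniteDimensional ℝ T]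
    (r : ℕ) (hr : r = Module.finrank ℝ T)
    (ε : ℝ) (hε : ε = (M : ℝ)⁻¹ * ∑ i, ⨅ g : T, ‖(g : R) - f i‖ ^ 2)
    (G : Matrix (Fin M) (Fin M) ℝ) (hG : G = Matrix.of fun i j => ⟪f i, f j⟫) :
    (M : ℝ) / ‖Matrix.toEuclideanCLM (𝕜 := ℝ) G‖ * (1 - ε) ≤ (r : ℝ) := by
  classical
  set A := Matrix.toEuclideanCLM (𝕜 := ℝ) G with hA
  set P := T.orthogonalProjectionOnto with hP
  set b := stdOrthonormalBasis ℝ T with hb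
  -- Step A : the infimum equals 1 - ‖P (f i)‖²
  have hinf : ∀ i, (⨅ g : T, ‖(g : R) - f i‖ ^ 2) = 1 - ‖(P (f i) : R)‖ ^ 2 := by
    intro i
    have hmin : ∀ g : T, ‖(P (f i) : R) - f i‖ ≤ ‖(g : R) - f i‖ := by
      intro g
      rw [norm_sub_rev, norm_sub_rev (g : R)]
      rw [show ((P (f i) : T) : R) = T.starProjection (f i) from rfl, Submodule.starProjection_minimal]
      exact ciInf_le ⟨0, fun x ⟨g', hg'⟩ => hg' ▸ norm_nonneg _⟩ g
    have h1 : (⨅ g : T, ‖(g : R) - f i‖ ^ 2) = ‖(P (f i) : R) - f i‖ ^ 2 := by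
      apply le_antisymm
      · exact ciInf_le ⟨0, fun x ⟨g', hg'⟩ => hg' ▸ sq_nonneg _⟩ (P (f i))
      · exact le_ciInf fun g => pow_le_pow_left₀ (norm_nonneg _) (hmin g) 2
    rw [h1]
    have h2 := Submodule.norm_sq_eq_add_norm_sq_projection (f i) T
    have h3 : (Tᗮ.orthogonalProjectionOnto (f i) : R) = f i - (P (f i) : R) :=
      Submodule.starProjection_orthogonal_val _
    rw [hf i, one_pow] at h2
    rw [norm_sub_rev]
    have h4 : ‖f i - (P (f i) : R)‖ ^ 2 = ‖Tᗮ.orthogonalProjectionOnto (f i)‖ ^ 2 := by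
      rw [← h3, ← Submodule.coe_norm]
    rw [h4]
    have h5 : ‖(P (f i) : R)‖ = ‖P (f i)‖ := (Submodule.coe_norm _).symm
    rw [h5]
    linarith [h2]
  -- Step B : Parseval for the projection
  have hpar : ∀ i, ‖(P (f i) : R)‖ ^ 2 = ∑ k, ⟪(b k : R), f i⟫ ^ 2 := by
    intro i
    have h := b.sum_inner_mul_inner (P (f i)) (P (f i))
    have hco : ∀ k, ⟪(b k : T), P (f i)⟫ = ⟪(b k : R), f i⟫ :=
      fun k => Submodule.inner_orthogonalProjectionOnto_eq_of_mem_left (K := T) (b k) (f i)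
    have hco' : ∀ k, ⟪P (f i), (b k : T)⟫ = ⟪(b k : R), f i⟫ := by
      intro k; rw [real_inner_comm]; exact hco k
    calc ‖(P (f i) : R)‖ ^ 2 = ‖P (f i)‖ ^ 2 := by rw [← Submodule.coe_norm]
      _ = ⟪P (f i), P (f i)⟫ := (real_inner_self_eq_norm_sq _).symm
      _ = ∑ k, ⟪P (f i), b k⟫ * ⟪b k, P (f i)⟫ := h.symm
      _ = ∑ k, ⟪(b k : R), f i⟫ ^ 2 := by
          refine Finset.sum_congr rfl fun k _ => ?_
          rw [hco k, hco' k, sq]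
  -- components of A
  have hAc : ∀ (c : EuclideanSpace ℝ (Fin M)) (i : Fin M), A c i = ∑ j, G i j * c j := by
    intro c i; rfl
  -- Step C : quadratic form identity
  have hquad : ∀ c : EuclideanSpace ℝ (Fin M), ⟪c, A c⟫ = ‖∑ i, c i • f i‖ ^ 2 := by
    intro c
    rw [← real_inner_self_eq_norm_sq, inner_sum]
    simp_rw [real_inner_smul_right, sum_inner, real_inner_smul_left]
    rw [PiLp.inner_apply]
    simp_rw [RCLike.inner_apply, starRingEnd_apply, star_trivial, hAc, hG, Finset.mul_sum, Finset.sum_mul]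
    rw [Finset.sum_comm]
    refine Finset.sum_congr rfl fun i _ => Finset.sum_congr rfl fun j _ => ?_
    simp only [Matrix.of_apply]
    rw [real_inner_comm]; ring
  -- Step D : each basis direction contributes at most ‖A‖
  have hkey : ∀ k, (∑ i, ⟪(b k : R), f i⟫ ^ 2) ≤ ‖A‖ := by
    intro k
    set c : EuclideanSpace ℝ (Fin M) := (WithLp.equiv 2 _).symm (fun i => ⟪(b k : R), f i⟫)
      with hc
    have hci : ∀ i, c i = ⟪(b k : R), f i⟫ := fun i => rfl
    set s := ∑ i, ⟪(b k : R), f i⟫ ^ 2 with hs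
    have hs0 : 0 ≤ s := Finset.sum_nonneg fun i _ => sq_nonneg _
    have hcs : ‖c‖ ^ 2 = s := by
      rw [← real_inner_self_eq_norm_sq, PiLp.inner_apply]
      simp_rw [RCLike.inner_apply, starRingEnd_apply, star_trivial, hci, hs, sq]
    have hbk : ‖(b k : R)‖ = 1 := by
      rw [← Submodule.coe_norm]; exact b.orthonormal.1 k
    have hu : ⟪∑ i, c i • f i, (b k : R)⟫ = s := by
      rw [sum_inner]
      simp_rw [real_inner_smul_left, hci, hs]
      refine Finset.sum_congr rfl fun i _ => ?_
      rw [real_inner_comm (f i), sq]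
    have h1 : s ≤ ‖∑ i, c i • f i‖ := by
      calc s = ⟪∑ i, c i • f i, (b k : R)⟫ := hu.symm
        _ ≤ ‖∑ i, c i • f i‖ * ‖(b k : R)‖ := real_inner_le_norm _ _
        _ = ‖∑ i, c i • f i‖ := by rw [hbk, mul_one]
    have h2 : ‖∑ i, c i • f i‖ ^ 2 ≤ ‖A‖ * s := by
      rw [← hquad c]
      calc ⟪c, A c⟫ ≤ ‖c‖ * ‖A c‖ := real_inner_le_norm _ _
        _ ≤ ‖c‖ * (‖A‖ * ‖c‖) := by
            have := A.le_opNorm c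
            exact mul_le_mul_of_nonneg_left this (norm_nonneg _)
        _ = ‖A‖ * ‖c‖ ^ 2 := by ring
        _ = ‖A‖ * s := by rw [hcs]
    have h3 : s * s ≤ ‖A‖ * s :=
      le_trans (by nlinarith [pow_le_pow_left₀ hs0 h1 2]) h2
    rcases hs0.eq_or_lt with h | h
    · rw [← h]; exact norm_nonneg _
    · exact le_of_mul_le_mul_right (by linarith) h
  -- Step E : summing up
  have hsum : (M : ℝ) - (∑ i, ⨅ g : T, ‖(g : R) - f i‖ ^ 2)
      ≤ (r : ℝ) * ‖A‖ := by
    have e1 : (M : ℝ) - (∑ i, ⨅ g : T, ‖(g : R) - f i‖ ^ 2)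
        = ∑ i, ‖(P (f i) : R)‖ ^ 2 := by
      simp_rw [hinf]
      rw [Finset.sum_sub_distrib]
      simp
    rw [e1]
    calc ∑ i, ‖(P (f i) : R)‖ ^ 2 = ∑ i, ∑ k, ⟪(b k : R), f i⟫ ^ 2 := by
          exact Finset.sum_congr rfl fun i _ => hpar i
      _ = ∑ k, ∑ i, ⟪(b k : R), f i⟫ ^ 2 := Finset.sum_comm
      _ ≤ ∑ _k : Fin (Module.finrank ℝ T), ‖A‖ :=
          Finset.sum_le_sum fun k _ => hkey k
      _ = (Module.finrank ℝ T : ℝ) * ‖A‖ := by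
          rw [Finset.sum_const, Finset.card_univ, Fintype.card_fin, nsmul_eq_mul]
      _ = (r : ℝ) * ‖A‖ := by rw [hr]
  -- conclusion
  rcases eq_or_ne ‖A‖ 0 with h0 | h0
  · rw [h0, div_zero, zero_mul]; positivity
  · have hApos : 0 < ‖A‖ := lt_of_le_of_ne (norm_nonneg _) (Ne.symm h0)
    rw [div_mul_eq_mul_div, div_le_iff₀ hApos]
    rcases Nat.eq_zero_or_pos M with hM | hM
    · subst hM
      simp only [Nat.cast_zero, zero_mul]
      positivity
    · have hMε : (M : ℝ) * ε = ∑ i, ⨅ g : T, ‖(g : R) - f i‖ ^ 2 := by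
        rw [hε, ← mul_assoc, mul_inv_cancel₀ (by positivity : (M:ℝ) ≠ 0), one_mul]
      have : (M : ℝ) * (1 - ε) = (M : ℝ) - (M : ℝ) * ε := by ring
      rw [this, hMε]
      exact hsum
end

section
/- Let $S \subseteq [P]$ with $|S| = l$, let $r > l$ be an integer with $r - l$ even, write $r - l = 2s$, and let $\mathbf{u} \in \mathbb{R}^P$. Then for $\mathbf{z}$ uniform on $\{+1,-1\}^P$, $\big|\mathbb{E}_{\mathbf{z}}[\chi_S(\mathbf{z}) \langle \mathbf{u},\mathbf{z}\rangle^r]\big| \le \frac{r!}{s!\,2^s} \Big(\prod_{k \in S} |u_k|\Big) \|\mathbf{u}\|_2^{2s}$. -/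
open PowerSeries Finset

/-- The value `±1` of a coordinate of the Boolean cube. -/
def sgn (b : Bool) : ℝ := if b then 1 else -1

noncomputable def coshS (u : ℝ) : PowerSeries ℝ :=
  PowerSeries.mk fun n => if Even n then u ^ n / n.factorial else 0

noncomputable def sinhS (u : ℝ) : PowerSeries ℝ :=
  PowerSeries.mk fun n => if Even n then 0 else u ^ n / n.factorial

noncomputable def Eser (a : ℝ) : PowerSeries ℝ :=
  PowerSeries.mk fun n => if Even n then a ^ (n / 2) / (n / 2).factorial else 0

lemma exp_coeff_real (n : ℕ) : coeff (R := ℝ) n (exp ℝ) = (n.factorial : ℝ)⁻¹ := by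
  rw [coeff_exp, eq_ratCast]
  push_cast [one_div]
  ring

lemma rescale_exp_coeff (a : ℝ) (n : ℕ) :
    coeff (R := ℝ) n (rescale a (exp ℝ)) = a ^ n / n.factorial := by
  rw [coeff_rescale, exp_coeff_real, div_eq_mul_inv]

lemma prod_rescale_exp {ι : Type*} (t : Finset ι) (a : ι → ℝ) :
    ∏ i ∈ t, rescale (a i) (exp ℝ) = rescale (∑ i ∈ t, a i) (exp ℝ) := by
  classical
  induction t using Finset.induction with
  | empty => simp [rescale_zero, constantCoeff_exp]
  | insert _ _ hi ih =>
      rw [Finset.prod_insert hi, ih, Finset.sum_insert hi, exp_mul_exp_eq_exp_add]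

lemma sinh_eq (u : ℝ) :
    PowerSeries.C (R := ℝ) 2⁻¹ * ∑ b : Bool,
      PowerSeries.C (R := ℝ) (sgn b) * rescale (u * sgn b) (exp ℝ) = sinhS u := by
  ext n
  rw [coeff_C_mul, Fintype.sum_bool]
  simp only [map_add, coeff_C_mul, rescale_exp_coeff, sgn, sinhS, coeff_mk]
  simp only [Bool.false_eq_true, if_true, if_false, mul_one, mul_neg_one]
  rcases Nat.even_or_odd n with h | h
  · rw [if_pos h, h.neg_pow]
    ring
  · rw [if_neg (Nat.not_even_iff_odd.mpr h), h.neg_pow]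
    ring

lemma cosh_eq (u : ℝ) :
    PowerSeries.C (R := ℝ) 2⁻¹ * ∑ b : Bool,
      PowerSeries.C (R := ℝ) 1 * rescale (u * sgn b) (exp ℝ) = coshS u := by
  ext n
  rw [coeff_C_mul, Fintype.sum_bool]
  simp only [map_add, coeff_C_mul, rescale_exp_coeff, sgn, coshS, coeff_mk]
  simp only [Bool.false_eq_true, if_true, if_false, mul_one, mul_neg_one, one_mul]
  rcases Nat.even_or_odd n with h | h
  · rw [if_pos h, h.neg_pow]
    ring
  · rw [if_neg (Nat.not_even_iff_odd.mpr h), h.neg_pow]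
    ring

lemma Eser_mul (a b : ℝ) : Eser a * Eser b = Eser (a + b) := by
  ext n
  rw [coeff_mul, Nat.sum_antidiagonal_eq_sum_range_succ_mk]
  simp only [Eser, coeff_mk]
  rcases Nat.even_or_odd n with ⟨m, hm⟩ | hodd
  · subst hm
    have hm' : m + m = 2 * m := by ring
    rw [hm']
    have himg : ((Finset.range (m + 1)).image (fun i => 2 * i)) ⊆ Finset.range (2 * m + 1) := by
      intro j hj
      simp only [Finset.mem_image, Finset.mem_range] at hj ⊢
      obtain ⟨i, hi, rfl⟩ := hj
      omega
    rw [← Finset.sum_subset himg ?_]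
    · rw [Finset.sum_image (by intro x _ y _ h; simp only at h; omega)]
      have key : ∀ i ∈ Finset.range (m + 1),
          (if Even (2 * i) then a ^ (2 * i / 2) / (2 * i / 2).factorial else 0) *
            (if Even (2 * m - 2 * i) then
              b ^ ((2 * m - 2 * i) / 2) / ((2 * m - 2 * i) / 2).factorial else 0)
          = (m.choose i : ℝ) * a ^ i * b ^ (m - i) / m.factorial := by
        intro i hi
        rw [Finset.mem_range] at hi
        have hi' : i ≤ m := by omega
        rw [if_pos ⟨i, by ring⟩, if_pos ⟨m - i, by omega⟩]
        have h2 : 2 * i / 2 = i := by omega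
        have h3 : (2 * m - 2 * i) / 2 = m - i := by omega
        rw [h2, h3]
        rw [div_mul_div_comm, eq_div_iff (by positivity), div_mul_eq_mul_div,
          div_eq_iff (by positivity)]
        have := Nat.choose_mul_factorial_mul_factorial hi'
        calc a ^ i * b ^ (m - i) * m.factorial
            = a ^ i * b ^ (m - i) * ((m.choose i) * i.factorial * (m - i).factorial : ℕ) := by
              rw [this]
          _ = (m.choose i : ℝ) * a ^ i * b ^ (m - i) * (i.factorial * (m - i).factorial) := by
              push_cast
              ring
      rw [Finset.sum_congr rfl key, if_pos ⟨m, by ring⟩]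
      have h2 : 2 * m / 2 = m := by omega
      rw [h2, add_pow]
      rw [Finset.sum_div, Finset.sum_congr rfl]
      intro i _
      push_cast
      ring
    · intro j hj hjn
      rw [Finset.mem_range] at hj
      have hodd : ¬ Even j := by
        intro ⟨i, hi⟩
        exact hjn (Finset.mem_image.mpr ⟨i, Finset.mem_range.mpr (by omega), by omega⟩)
      rw [if_neg hodd, zero_mul]
  · rw [if_neg (Nat.not_even_iff_odd.mpr hodd)]
    apply Finset.sum_eq_zero
    intro j hj
    rw [Finset.mem_range] at hj
    rcases Nat.even_or_odd j with he | ho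
    · have : ¬ Even (n - j) := by
        rcases he with ⟨p, hp⟩
        rcases hodd with ⟨k, hk⟩
        rintro ⟨q, hq⟩
        omega
      rw [if_neg this, mul_zero]
    · rw [if_neg (Nat.not_even_iff_odd.mpr ho), zero_mul]

lemma Eser_zero : Eser 0 = 1 := by
  ext n
  rw [coeff_one]
  simp only [Eser, coeff_mk]
  rcases Nat.eq_zero_or_pos n with rfl | hn
  · norm_num
  · rcases Nat.even_or_odd n with he | ho
    · obtain ⟨p, hp⟩ := he
      rw [if_pos ⟨p, hp⟩, if_neg (by omega : ¬ n = 0), zero_pow (by omega : ¬ n / 2 = 0),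
        zero_div]
    · rw [if_neg (Nat.not_even_iff_odd.mpr ho), if_neg (by omega : ¬ n = 0)]

lemma Eser_prod {ι : Type*} (t : Finset ι) (a : ι → ℝ) :
    ∏ i ∈ t, Eser (a i) = Eser (∑ i ∈ t, a i) := by
  classical
  induction t using Finset.induction with
  | empty => simp [Eser_zero]
  | insert _ _ hi ih =>
      rw [Finset.prod_insert hi, ih, Finset.sum_insert hi, Eser_mul]

def Dom (f g : PowerSeries ℝ) : Prop := ∀ n, |coeff (R := ℝ) n f| ≤ coeff (R := ℝ) n g

lemma Dom.mul {f g f' g' : PowerSeries ℝ} (h : Dom f g) (h' : Dom f' g') :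
    Dom (f * f') (g * g') := by
  intro n
  rw [coeff_mul, coeff_mul]
  refine (Finset.abs_sum_le_sum_abs _ _).trans (Finset.sum_le_sum fun p _ => ?_)
  rw [abs_mul]
  exact mul_le_mul (h _) (h' _) (abs_nonneg _) ((abs_nonneg _).trans (h _))

lemma Dom.one : Dom 1 1 := by
  intro n
  rw [coeff_one]
  split <;> simp

lemma Dom.prod {ι : Type*} (t : Finset ι) (f g : ι → PowerSeries ℝ)
    (h : ∀ i ∈ t, Dom (f i) (g i)) : Dom (∏ i ∈ t, f i) (∏ i ∈ t, g i) := by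
  classical
  induction t using Finset.induction with
  | empty => simpa using Dom.one
  | insert _ _ hi ih =>
      rw [Finset.prod_insert hi, Finset.prod_insert hi]
      exact Dom.mul (h _ (Finset.mem_insert_self _ _))
        (ih fun i hit => h i (Finset.mem_insert_of_mem hit))

lemma two_pow_mul_fact_le (m : ℕ) : 2 ^ m * m.factorial ≤ (2 * m).factorial := by
  induction m with
  | zero => simp
  | succ k ih =>
      have h1 : 2 * (k + 1) = 2 * k + 1 + 1 := by ring
      rw [h1, Nat.factorial_succ, Nat.factorial_succ, Nat.factorial_succ, pow_succ]
      calc 2 ^ k * 2 * ((k + 1) * k.factorial)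
          = (2 * (k + 1)) * (2 ^ k * k.factorial) := by ring
        _ ≤ (2 * k + 1 + 1) * ((2 * k + 1) * (2 * k).factorial) := by
            refine Nat.mul_le_mul (by omega) (ih.trans ?_)
            exact Nat.le_mul_of_pos_left _ (by omega)

lemma aux_fact_div (v : ℝ) (m n : ℕ) (h : 2 ^ m * m.factorial ≤ n.factorial) :
    |v| ^ (2 * m) / n.factorial ≤ (v ^ 2 / 2) ^ m / m.factorial := by
  have hv : |v| ^ (2 * m) = (v ^ 2) ^ m := by
    rw [pow_mul, sq_abs]
  rw [hv, div_pow, div_div]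
  apply div_le_div_of_nonneg_left (by positivity) (by positivity)
  calc ((2:ℝ) ^ m * m.factorial) = ((2 ^ m * m.factorial : ℕ) : ℝ) := by push_cast; ring
    _ ≤ n.factorial := by exact_mod_cast h

lemma dom_cosh (u : ℝ) : Dom (coshS u) (Eser (u ^ 2 / 2)) := by
  intro n
  simp only [coshS, Eser, coeff_mk]
  rcases Nat.even_or_odd n with ⟨m, hm⟩ | h
  · have hn : n = 2 * m := by omega
    subst hn
    rw [if_pos ⟨m, by ring⟩, if_pos ⟨m, by ring⟩]
    have h2 : 2 * m / 2 = m := by omega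
    rw [h2, abs_div, abs_pow, Nat.abs_cast]
    exact aux_fact_div u m (2 * m) (two_pow_mul_fact_le m)
  · rw [if_neg (Nat.not_even_iff_odd.mpr h), if_neg (Nat.not_even_iff_odd.mpr h), abs_zero]

lemma dom_sinh (u : ℝ) :
    Dom (sinhS u) (PowerSeries.C (R := ℝ) |u| * (X * Eser (u ^ 2 / 2))) := by
  intro n
  rw [coeff_C_mul, ← pow_one (X : PowerSeries ℝ), coeff_X_pow_mul']
  simp only [sinhS, Eser, coeff_mk]
  rcases Nat.even_or_odd n with he | ⟨m, hm⟩
  · rw [if_pos he, abs_zero]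
    rcases Nat.eq_zero_or_pos n with rfl | hn
    · simp
    · rw [if_pos (by omega : 1 ≤ n)]
      have : ¬ Even (n - 1) := by
        rcases he with ⟨p, hp⟩
        rintro ⟨q, hq⟩
        omega
      rw [if_neg this, mul_zero]
  · have hn : n = 2 * m + 1 := by omega
    subst hn
    rw [if_neg (by simp [Nat.even_add_one, Nat.even_mul]), if_pos (by omega)]
    have h1 : 2 * m + 1 - 1 = 2 * m := by omega
    rw [h1, if_pos ⟨m, by ring⟩]
    have h2 : 2 * m / 2 = m := by omega
    rw [h2, abs_div, abs_pow, Nat.abs_cast, pow_succ, mul_comm (|u| ^ (2 * m)) |u|,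
      mul_div_assoc]
    refine mul_le_mul_of_nonneg_left ?_ (abs_nonneg u)
    refine aux_fact_div u m (2 * m + 1) ?_
    exact (two_pow_mul_fact_le m).trans (Nat.factorial_le (by omega))

lemma key_identity (P : ℕ) (S : Finset (Fin P)) (r : ℕ) (u : Fin P → ℝ) :
    ((2 ^ P : ℝ))⁻¹ * ∑ z : Fin P → Bool,
        (∏ i ∈ S, sgn (z i)) * (∑ i, u i * sgn (z i)) ^ r
    = r.factorial *
        coeff (R := ℝ) r (∏ i, if i ∈ S then sinhS (u i) else coshS (u i)) := by
  classical
  have hr : (r.factorial : ℝ) ≠ 0 := Nat.cast_ne_zero.mpr r.factorial_ne_zero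
  have step1 : ∀ z : Fin P → Bool,
      (∏ i ∈ S, sgn (z i)) * (∑ i, u i * sgn (z i)) ^ r
      = r.factorial * coeff (R := ℝ) r
          (∏ i, (PowerSeries.C (R := ℝ) (if i ∈ S then sgn (z i) else 1) *
            rescale (u i * sgn (z i)) (exp ℝ))) := by
    intro z
    rw [Finset.prod_mul_distrib, ← map_prod, prod_rescale_exp, coeff_C_mul,
      rescale_exp_coeff, Finset.prod_ite_mem, Finset.univ_inter]
    field_simp
  rw [Finset.sum_congr rfl (fun z _ => step1 z), ← Finset.mul_sum, ← map_sum]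
  rw [← Fintype.piFinset_univ, Finset.sum_prod_piFinset (Finset.univ : Finset Bool)
    (fun i b => PowerSeries.C (R := ℝ) (if i ∈ S then sgn b else 1) * rescale (u i * sgn b) (exp ℝ))]
  have hhalf : ((2 : ℝ) ^ P)⁻¹ * ((r.factorial : ℝ) * coeff (R := ℝ) r
        (∏ i, ∑ b : Bool, PowerSeries.C (R := ℝ) (if i ∈ S then sgn b else 1) *
          rescale (u i * sgn b) (exp ℝ)))
      = (r.factorial : ℝ) * coeff (R := ℝ) r
        (∏ i, (PowerSeries.C (R := ℝ) 2⁻¹ * ∑ b : Bool, PowerSeries.C (R := ℝ) (if i ∈ S then sgn b else 1) *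
          rescale (u i * sgn b) (exp ℝ))) := by
    rw [Finset.prod_mul_distrib, Finset.prod_const, Finset.card_univ, Fintype.card_fin,
      ← map_pow, coeff_C_mul]
    rw [inv_pow]
    ring
  rw [hhalf]
  have hfin : (∏ i, (PowerSeries.C (R := ℝ) 2⁻¹ *
        ∑ b : Bool, PowerSeries.C (R := ℝ) (if i ∈ S then sgn b else 1) *
          rescale (u i * sgn b) (exp ℝ)))
      = ∏ i, (if i ∈ S then sinhS (u i) else coshS (u i)) := by
    refine Finset.prod_congr rfl fun i _ => ?_
    by_cases h : i ∈ S
    · simp only [h, if_true]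
      exact sinh_eq (u i)
    · simp only [h, if_false]
      exact cosh_eq (u i)
  rw [hfin]

/-- Bound on higher moments of `⟨u, z⟩` against a character: for `|S| = l`, `r > l` with
`r - l = 2s` even, `|E_z[χ_S(z) ⟨u,z⟩^r]| ≤ (r! / (s! 2^s)) (∏_{k∈S} |u k|) ‖u‖₂^{2s}`. -/
theorem character_inner_moment_bound (P : ℕ) (S : Finset (Fin P)) (l r s : ℕ)
    (hl : S.card = l) (hrl : l < r) (hs : r - l = 2 * s) (u : Fin P → ℝ) :
    |((2 ^ P : ℝ))⁻¹ * ∑ z : Fin P → Bool,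
        (∏ i ∈ S, sgn (z i)) * (∑ i, u i * sgn (z i)) ^ r| ≤
      (r.factorial : ℝ) / (s.factorial * 2 ^ s) *
        (∏ k ∈ S, |u k|) * (∑ i, (u i) ^ 2) ^ s := by
  classical
  rw [key_identity P S r u, abs_mul, Nat.abs_cast]
  have hdom : Dom (∏ i, if i ∈ S then sinhS (u i) else coshS (u i))
      (∏ i, if i ∈ S then PowerSeries.C (R := ℝ) |u i| * (X * Eser (u i ^ 2 / 2))
        else Eser (u i ^ 2 / 2)) := by
    refine Dom.prod _ _ _ fun i _ => ?_
    by_cases h : i ∈ S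
    · simpa [h] using dom_sinh (u i)
    · simpa [h] using dom_cosh (u i)
  have h1 : (∏ i ∈ S, (PowerSeries.C (R := ℝ) |u i| * (X * Eser (u i ^ 2 / 2))))
      = PowerSeries.C (R := ℝ) (∏ k ∈ S, |u k|) *
        ((X : PowerSeries ℝ) ^ l * Eser (∑ i ∈ S, u i ^ 2 / 2)) := by
    rw [Finset.prod_mul_distrib, Finset.prod_mul_distrib, ← map_prod, Finset.prod_const,
      hl, Eser_prod]
  have hGprod : (∏ i, if i ∈ S then PowerSeries.C (R := ℝ) |u i| * (X * Eser (u i ^ 2 / 2))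
        else Eser (u i ^ 2 / 2))
      = PowerSeries.C (R := ℝ) (∏ k ∈ S, |u k|) *
        ((X : PowerSeries ℝ) ^ l * Eser (∑ i, u i ^ 2 / 2)) := by
    rw [← Finset.prod_mul_prod_compl S (fun i =>
      if i ∈ S then PowerSeries.C (R := ℝ) |u i| * (X * Eser (u i ^ 2 / 2)) else Eser (u i ^ 2 / 2))]
    rw [Finset.prod_congr rfl (fun i (hi : i ∈ S) => if_pos hi),
      Finset.prod_congr rfl (fun i (hi : i ∈ Sᶜ) => if_neg (Finset.mem_compl.mp hi)),
      h1, Eser_prod, mul_assoc, mul_assoc, Eser_mul, Finset.sum_add_sum_compl]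
  have hrls : (r - l) / 2 = s := by omega
  have hcoeff : coeff (R := ℝ) r (∏ i, if i ∈ S then
        PowerSeries.C (R := ℝ) |u i| * (X * Eser (u i ^ 2 / 2)) else Eser (u i ^ 2 / 2))
      = (∏ k ∈ S, |u k|) * (((∑ i, u i ^ 2) / 2) ^ s / s.factorial) := by
    rw [hGprod, coeff_C_mul, coeff_X_pow_mul', if_pos (by omega : l ≤ r)]
    simp only [Eser, coeff_mk]
    rw [if_pos ⟨s, by omega⟩, hrls, ← Finset.sum_div]
  calc (r.factorial : ℝ) * |coeff (R := ℝ) r (∏ i, if i ∈ S then sinhS (u i) else coshS (u i))|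
      ≤ (r.factorial : ℝ) * coeff (R := ℝ) r (∏ i, if i ∈ S then
          PowerSeries.C (R := ℝ) |u i| * (X * Eser (u i ^ 2 / 2)) else Eser (u i ^ 2 / 2)) :=
        mul_le_mul_of_nonneg_left (hdom r) (Nat.cast_nonneg _)
    _ = (r.factorial : ℝ) / (s.factorial * 2 ^ s) *
        (∏ k ∈ S, |u k|) * (∑ i, (u i) ^ 2) ^ s := by
        rw [hcoeff, div_pow]
        have hsf : (s.factorial : ℝ) ≠ 0 := Nat.cast_ne_zero.mpr s.factorial_ne_zero
        have h2 : ((2 : ℝ)) ^ s ≠ 0 := by positivity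
        field_simp
end

section
/- Let $P \le d/2$ and $\eta \in (0,1)$. Consider the degree-$P$ vanilla staircase $f_P(\mathbf{x}) = P^{-1/2}\sum_{i=1}^P x_1 x_2 \cdots x_i$ on $\{+1,-1\}^d$, and let $\mathsf{P}_\ell$ denote the orthogonal projection in $L^2(\{+1,-1\}^d)$ onto the span of all Fourier characters $\chi_S$ with $|S| \ge \ell$. Then for any fixed permutation $\tau_1$ of $[d]$ and a uniformly random permutation $\tau_2$ of $[d]$, $\mathbb{E}_{\tau_2}\big[|\langle f_P \circ \tau_1,\, \mathsf{P}_\ell (f_P \circ \tau_2)\rangle_{L^2}|\big] \le \binom{d}{\ell}^{-1}$. -/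
/-- The `L²` inner product on the uniform Boolean cube `{±1}^d`. -/
noncomputable def innerL2 (d : ℕ) (f g : (Fin d → Bool) → ℝ) : ℝ :=
  ((2 ^ d : ℝ))⁻¹ * ∑ x : Fin d → Bool, f x * g x

/-- The Fourier–Walsh character `χ_S`. -/
def chi {d : ℕ} (S : Finset (Fin d)) (x : Fin d → Bool) : ℝ :=
  ∏ i ∈ S, sgn (x i)

/-- The degree-`P` vanilla staircase `f_P(x) = P^{-1/2} ∑_{i=1}^P x_1 ⋯ x_i` on `{±1}^d`. -/
noncomputable def staircase (P d : ℕ) (x : Fin d → Bool) : ℝ :=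
  (Real.sqrt P)⁻¹ * ∑ i ∈ Finset.Icc 1 P,
    ∏ j ∈ Finset.univ.filter (fun j : Fin d => (j : ℕ) < i), sgn (x j)

/-- The orthogonal projection onto the span of characters `χ_S` with `|S| ≥ ℓ`. -/
noncomputable def projHighDeg (d ℓ : ℕ) (f : (Fin d → Bool) → ℝ) : (Fin d → Bool) → ℝ :=
  fun x => ∑ S : Finset (Fin d),
    if ℓ ≤ S.card then innerL2 d f (chi S) * chi S x else 0


lemma sgn_mul_self (b : Bool) : sgn b * sgn b = 1 := by cases b <;> simp [sgn]

lemma sum_chi {d : ℕ} (U : Finset (Fin d)) :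
    ∑ x : Fin d → Bool, chi U x = if U = ∅ then (2:ℝ)^d else 0 := by
  classical
  have h : ∀ x : Fin d → Bool, chi U x = ∏ i : Fin d, (if i ∈ U then sgn (x i) else 1) := by
    intro x
    rw [chi, ← Finset.prod_filter]
    congr 1
    ext i; simp
  simp_rw [h]
  have := Finset.prod_univ_sum (fun _ : Fin d => (Finset.univ : Finset Bool))
    (fun i b => if i ∈ U then sgn b else 1)
  rw [Fintype.piFinset_univ] at this
  rw [← this]
  have hsum : ∀ i : Fin d, (∑ b : Bool, if i ∈ U then sgn b else 1)
      = if i ∈ U then 0 else 2 := by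
    intro i; by_cases hi : i ∈ U <;> simp [hi, sgn]
  simp_rw [hsum]
  by_cases hU : U = ∅
  · simp [hU]
  · obtain ⟨i, hi⟩ := Finset.nonempty_iff_ne_empty.mpr hU
    rw [if_neg hU]
    exact Finset.prod_eq_zero (Finset.mem_univ i) (by simp [hi])

lemma chi_mul_chi {d : ℕ} (S T : Finset (Fin d)) (x : Fin d → Bool) :
    chi S x * chi T x = chi (symmDiff S T) x := by
  classical
  unfold chi
  have h1 : ∏ i ∈ S, sgn (x i) = (∏ i ∈ S \ T, sgn (x i)) * ∏ i ∈ S ∩ T, sgn (x i) := by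
    rw [← Finset.prod_union (Finset.disjoint_sdiff_inter S T), Finset.sdiff_union_inter]
  have h2 : ∏ i ∈ T, sgn (x i) = (∏ i ∈ T \ S, sgn (x i)) * ∏ i ∈ S ∩ T, sgn (x i) := by
    rw [Finset.inter_comm, ← Finset.prod_union (Finset.disjoint_sdiff_inter T S),
      Finset.sdiff_union_inter]
  have h3 : ∏ i ∈ symmDiff S T, sgn (x i) = (∏ i ∈ S \ T, sgn (x i)) * ∏ i ∈ T \ S, sgn (x i) := by
    rw [symmDiff_def, Finset.sup_eq_union, Finset.prod_union disjoint_sdiff_sdiff]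
  have h4 : (∏ i ∈ S ∩ T, sgn (x i)) * ∏ i ∈ S ∩ T, sgn (x i) = 1 := by
    rw [← Finset.prod_mul_distrib]
    exact Finset.prod_eq_one fun i _ => sgn_mul_self _
  rw [h1, h2, h3]
  linear_combination (∏ i ∈ S \ T, sgn (x i)) * (∏ i ∈ T \ S, sgn (x i)) * h4

lemma innerL2_chi_chi {d : ℕ} (S T : Finset (Fin d)) :
    innerL2 d (chi S) (chi T) = if S = T then 1 else 0 := by
  unfold innerL2
  simp_rw [chi_mul_chi, sum_chi]
  have he : symmDiff S T = ∅ ↔ S = T := symmDiff_eq_bot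
  split_ifs with h1 h2 h2
  · field_simp
  · exact absurd (he.mp h1) h2
  · exact absurd (he.mpr h2) h1
  · simp

lemma innerL2_sum_right {d : ℕ} {ι : Type*} (f : (Fin d → Bool) → ℝ) (t : Finset ι)
    (g : ι → (Fin d → Bool) → ℝ) :
    innerL2 d f (fun x => ∑ i ∈ t, g i x) = ∑ i ∈ t, innerL2 d f (g i) := by
  unfold innerL2
  simp_rw [Finset.mul_sum]
  rw [Finset.sum_comm]

lemma innerL2_sum_left {d : ℕ} {ι : Type*} (g : (Fin d → Bool) → ℝ) (t : Finset ι)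
    (f : ι → (Fin d → Bool) → ℝ) :
    innerL2 d (fun x => ∑ i ∈ t, f i x) g = ∑ i ∈ t, innerL2 d (f i) g := by
  unfold innerL2
  simp_rw [Finset.sum_mul, Finset.mul_sum]
  rw [Finset.sum_comm]

lemma innerL2_smul_right {d : ℕ} (c : ℝ) (f g : (Fin d → Bool) → ℝ) :
    innerL2 d f (fun x => c * g x) = c * innerL2 d f g := by
  unfold innerL2
  simp_rw [mul_left_comm (f _) c, ← Finset.mul_sum]
  ring

lemma innerL2_smul_left {d : ℕ} (c : ℝ) (f g : (Fin d → Bool) → ℝ) :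
    innerL2 d (fun x => c * f x) g = c * innerL2 d f g := by
  unfold innerL2
  simp_rw [mul_assoc, ← Finset.mul_sum]
  ring

lemma innerL2_ite_right {d : ℕ} (p : Prop) [Decidable p] (f g : (Fin d → Bool) → ℝ) :
    innerL2 d f (fun x => if p then g x else 0) = if p then innerL2 d f g else 0 := by
  split_ifs with h <;> simp [innerL2]

lemma card_filter_lt (d i : ℕ) (h : i ≤ d) :
    (Finset.univ.filter (fun j : Fin d => (j : ℕ) < i)).card = i := by
  have : Finset.univ.filter (fun j : Fin d => (j : ℕ) < i)
      = Finset.image (Fin.castLE h) Finset.univ := by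
    ext j
    simp only [Finset.mem_filter, Finset.mem_univ, true_and, Finset.mem_image]
    constructor
    · intro hj; exact ⟨⟨j, hj⟩, rfl⟩
    · rintro ⟨k, -, rfl⟩; exact k.isLt
  rw [this, Finset.card_image_of_injective _ (Fin.castLE_injective h), Finset.card_univ,
    Fintype.card_fin]

lemma staircase_perm_eq (P d : ℕ) (τ : Equiv.Perm (Fin d)) (x : Fin d → Bool) :
    staircase P d (fun i => x (τ i))
      = ∑ i ∈ Finset.Icc 1 P, (Real.sqrt P)⁻¹ *
          chi ((Finset.univ.filter fun j : Fin d => (j : ℕ) < i).image τ) x := by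
  unfold staircase chi
  rw [Finset.mul_sum]
  refine Finset.sum_congr rfl fun i _ => ?_
  congr 1
  rw [Finset.prod_image (fun a _ b _ h => τ.injective h)]

lemma count_perm_image_le {d i : ℕ} (S A : Finset (Fin d)) (hS : S.card = i) (hA : A.card = i) :
    (Finset.univ.filter (fun τ : Equiv.Perm (Fin d) => S.image τ = A)).card
      ≤ i.factorial * (d - i).factorial := by
  classical
  have hcard1 : Fintype.card {x // x ∈ S} = Fintype.card {x // x ∈ A} := by
    simp [Fintype.card_coe, hS, hA]
  have hcard2 : Fintype.card {x // x ∈ Sᶜ} = Fintype.card {x // x ∈ Aᶜ} := by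
    simp [Fintype.card_coe, Finset.card_compl, hS, hA]
  have key : ∀ τ : Equiv.Perm (Fin d), S.image τ = A → ∀ x : Fin d, x ∈ S ↔ τ x ∈ A := by
    intro τ hτ x
    constructor
    · intro hx; rw [← hτ]; exact Finset.mem_image_of_mem _ hx
    · intro hx; rw [← hτ] at hx
      obtain ⟨y, hy, hxy⟩ := Finset.mem_image.mp hx
      rwa [← τ.injective hxy]
  set f : Equiv.Perm (Fin d) → ({x // x ∈ S} ≃ {x // x ∈ A}) × ({x // x ∈ Sᶜ} ≃ {x // x ∈ Aᶜ}) :=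
    fun τ => if h : ∀ x : Fin d, x ∈ S ↔ τ x ∈ A then
      ((τ : Fin d ≃ Fin d).subtypeEquiv h,
       (τ : Fin d ≃ Fin d).subtypeEquiv (fun x => by
          simp only [Finset.mem_compl]
          exact not_iff_not.mpr (h x)))
    else (Fintype.equivOfCardEq hcard1, Fintype.equivOfCardEq hcard2) with hf
  have hinj : Set.InjOn f
      ↑(Finset.univ.filter (fun τ : Equiv.Perm (Fin d) => S.image τ = A)) := by
    intro τ₁ h₁ τ₂ h₂ heq
    have h₁' : S.image τ₁ = A := by
      simpa using (Finset.mem_coe.mp h₁)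
    have h₂' : S.image τ₂ = A := by
      simpa using (Finset.mem_coe.mp h₂)
    have k₁ := key τ₁ h₁'
    have k₂ := key τ₂ h₂'
    rw [hf] at heq
    simp only [dif_pos k₁, dif_pos k₂] at heq
    refine Equiv.ext fun x => ?_
    by_cases hx : x ∈ S
    · have := congrArg (fun g => ((g.1 ⟨x, hx⟩ : {x // x ∈ A}) : Fin d)) heq
      simpa using this
    · have hx' : x ∈ Sᶜ := Finset.mem_compl.mpr hx
      have := congrArg (fun g => ((g.2 ⟨x, hx'⟩ : {x // x ∈ Aᶜ}) : Fin d)) heq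
      simpa using this
  have hle := Finset.card_le_card_of_injOn f (fun τ _ => Finset.mem_univ (f τ)) hinj
  calc (Finset.univ.filter (fun τ : Equiv.Perm (Fin d) => S.image τ = A)).card
      ≤ (Finset.univ : Finset (({x // x ∈ S} ≃ {x // x ∈ A}) × ({x // x ∈ Sᶜ} ≃ {x // x ∈ Aᶜ}))).card := hle
    _ = i.factorial * (d - i).factorial := by
        rw [Finset.card_univ, Fintype.card_prod,
          Fintype.card_equiv (Fintype.equivOfCardEq hcard1),
          Fintype.card_equiv (Fintype.equivOfCardEq hcard2)]
        simp [Fintype.card_coe, hS, Finset.card_compl]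

lemma staircase_coeff (P d : ℕ) (τ : Equiv.Perm (Fin d)) (S : Finset (Fin d)) :
    innerL2 d (fun x => staircase P d (fun i => x (τ i))) (chi S)
      = (Real.sqrt P)⁻¹ * ∑ i ∈ Finset.Icc 1 P,
          (if (Finset.univ.filter fun j : Fin d => (j : ℕ) < i).image τ = S then 1 else 0) := by
  simp_rw [staircase_perm_eq]
  rw [innerL2_sum_left]
  simp_rw [innerL2_smul_left, innerL2_chi_chi, Finset.mul_sum]

lemma V_eq (P d ℓ : ℕ) (hPd : 2 * P ≤ d) (τ₁ τ₂ : Equiv.Perm (Fin d)) :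
    innerL2 d (fun x => staircase P d (fun i => x (τ₁ i)))
      (projHighDeg d ℓ (fun x => staircase P d (fun i => x (τ₂ i))))
    = (P : ℝ)⁻¹ * ∑ i ∈ Finset.Icc 1 P,
        (if ℓ ≤ i ∧ (Finset.univ.filter fun j : Fin d => (j : ℕ) < i).image τ₂
            = (Finset.univ.filter fun j : Fin d => (j : ℕ) < i).image τ₁ then 1 else 0) := by
  classical
  set c : ℝ := (Real.sqrt P)⁻¹ with hc
  set A : Equiv.Perm (Fin d) → ℕ → Finset (Fin d) :=
    fun τ i => (Finset.univ.filter fun j : Fin d => (j : ℕ) < i).image τ with hA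
  have hcardA : ∀ τ : Equiv.Perm (Fin d), ∀ i ∈ Finset.Icc 1 P, (A τ i).card = i := by
    intro τ i hi
    rw [Finset.mem_Icc] at hi
    rw [hA]
    rw [Finset.card_image_of_injective _ τ.injective, card_filter_lt d i (by omega)]
  -- expand the projection
  rw [show projHighDeg d ℓ (fun x => staircase P d (fun i => x (τ₂ i)))
      = fun x => ∑ S : Finset (Fin d), (if ℓ ≤ S.card then
          innerL2 d (fun x => staircase P d (fun i => x (τ₂ i))) (chi S) * chi S x else 0) from rfl]
  rw [innerL2_sum_right]
  have step1 : ∀ S : Finset (Fin d),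
      innerL2 d (fun x => staircase P d (fun i => x (τ₁ i)))
        (fun x => if ℓ ≤ S.card then
          innerL2 d (fun x => staircase P d (fun i => x (τ₂ i))) (chi S) * chi S x else 0)
      = if ℓ ≤ S.card then
          (c * ∑ j ∈ Finset.Icc 1 P, (if A τ₂ j = S then 1 else 0)) *
          (c * ∑ i ∈ Finset.Icc 1 P, (if A τ₁ i = S then 1 else 0)) else 0 := by
    intro S
    rw [innerL2_ite_right, innerL2_smul_right, staircase_coeff, staircase_coeff]
  simp_rw [step1]
  -- reorganize into a double sum over i, j and S
  have step2 : ∀ S : Finset (Fin d),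
      (if ℓ ≤ S.card then
          (c * ∑ j ∈ Finset.Icc 1 P, (if A τ₂ j = S then 1 else 0)) *
          (c * ∑ i ∈ Finset.Icc 1 P, (if A τ₁ i = S then 1 else 0)) else 0)
      = ∑ i ∈ Finset.Icc 1 P, ∑ j ∈ Finset.Icc 1 P,
          (if A τ₁ i = S then (if ℓ ≤ S.card ∧ A τ₂ j = S then c * c else 0) else 0) := by
    intro S
    split_ifs with h
    · rw [Finset.mul_sum, Finset.mul_sum, Finset.sum_mul_sum, Finset.sum_comm]
      refine Finset.sum_congr rfl fun i _ => Finset.sum_congr rfl fun j _ => ?_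
      split_ifs with h1 h2 h2 <;> simp_all <;> ring
    · symm
      refine Finset.sum_eq_zero fun i _ => Finset.sum_eq_zero fun j _ => ?_
      split_ifs with h1 h2 <;> simp_all
  simp_rw [step2]
  rw [Finset.sum_comm]
  have step3 : ∀ i ∈ Finset.Icc 1 P,
      (∑ S : Finset (Fin d), ∑ j ∈ Finset.Icc 1 P,
        (if A τ₁ i = S then (if ℓ ≤ S.card ∧ A τ₂ j = S then c * c else 0) else 0))
      = (if ℓ ≤ i ∧ A τ₂ i = A τ₁ i then c * c else 0) := by
    intro i hi
    rw [Finset.sum_comm]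
    have hsum : ∀ j, (∑ S : Finset (Fin d),
        (if A τ₁ i = S then (if ℓ ≤ S.card ∧ A τ₂ j = S then c * c else 0) else 0))
        = (if ℓ ≤ (A τ₁ i).card ∧ A τ₂ j = A τ₁ i then c * c else 0) := by
      intro j
      rw [Finset.sum_ite_eq]
      simp
    simp_rw [hsum, hcardA τ₁ i hi]
    rw [Finset.sum_eq_single_of_mem i hi]
    intro j hj hji
    rw [if_neg]
    rintro ⟨-, hEq⟩
    have := hcardA τ₂ j hj
    rw [hEq, hcardA τ₁ i hi] at this
    exact hji this.symm
  rw [Finset.sum_congr rfl step3]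
  have hcc : c * c = (P : ℝ)⁻¹ := by
    rw [hc, ← mul_inv, Real.mul_self_sqrt (Nat.cast_nonneg P)]
  rw [Finset.mul_sum]
  refine Finset.sum_congr rfl fun i _ => ?_
  rw [mul_ite, mul_one, mul_zero, hcc]

lemma choose_mono_of_le_half {d a b : ℕ} (hab : a ≤ b) (hb : 2 * b ≤ d) :
    d.choose a ≤ d.choose b := by
  induction b, hab using Nat.le_induction with
  | base => exact le_rfl
  | succ b hb' ih =>
    have h2b : 2 * b ≤ d := by omega
    refine (ih h2b).trans (Nat.choose_le_succ_of_lt_half_left ?_)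
    omega

/-- For `P ≤ d/2`, a fixed permutation `τ₁` and a uniformly random permutation `τ₂` of
`[d]`, the expected correlation of the permuted staircase with the high-degree part of
another independently permuted staircase satisfies
`E_{τ₂}[|⟨f_P ∘ τ₁, P_ℓ (f_P ∘ τ₂)⟩|] ≤ (d choose ℓ)⁻¹`. -/
theorem staircase_highdeg_correlation_bound (P d ℓ : ℕ) (hP : 1 ≤ P) (hPd : 2 * P ≤ d)
    (τ₁ : Equiv.Perm (Fin d)) :
    ((d.factorial : ℝ))⁻¹ * ∑ τ₂ : Equiv.Perm (Fin d),
      |innerL2 d (fun x => staircase P d (fun i => x (τ₁ i)))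
        (projHighDeg d ℓ (fun x => staircase P d (fun i => x (τ₂ i))))| ≤
      ((d.choose ℓ : ℝ))⁻¹ := by
  classical
  set cond : Equiv.Perm (Fin d) → ℕ → Prop := fun τ₂ i =>
    ℓ ≤ i ∧ (Finset.univ.filter fun j : Fin d => (j : ℕ) < i).image τ₂
      = (Finset.univ.filter fun j : Fin d => (j : ℕ) < i).image τ₁ with hcond
  have habs : ∀ τ₂ : Equiv.Perm (Fin d),
      |innerL2 d (fun x => staircase P d (fun i => x (τ₁ i)))
        (projHighDeg d ℓ (fun x => staircase P d (fun i => x (τ₂ i))))|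
      = (P : ℝ)⁻¹ * ∑ i ∈ Finset.Icc 1 P, (if cond τ₂ i then 1 else 0) := by
    intro τ₂
    rw [V_eq P d ℓ hPd τ₁ τ₂]
    refine abs_of_nonneg ?_
    refine mul_nonneg (by positivity) (Finset.sum_nonneg fun i _ => ?_)
    split_ifs <;> norm_num
  simp_rw [habs]
  set T : ℕ → ℝ := fun i => ∑ τ₂ : Equiv.Perm (Fin d), (if cond τ₂ i then (1:ℝ) else 0) with hT
  have hrearr : ((d.factorial : ℝ))⁻¹ * ∑ τ₂ : Equiv.Perm (Fin d),
      ((P : ℝ)⁻¹ * ∑ i ∈ Finset.Icc 1 P, (if cond τ₂ i then (1:ℝ) else 0))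
      = (P : ℝ)⁻¹ * ∑ i ∈ Finset.Icc 1 P, ((d.factorial : ℝ))⁻¹ * T i := by
    rw [← Finset.mul_sum, Finset.sum_comm, ← Finset.mul_sum]
    ring
  rw [hrearr]
  have hkey : ∀ i ∈ Finset.Icc 1 P, ((d.factorial : ℝ))⁻¹ * T i ≤ ((d.choose ℓ : ℝ))⁻¹ := by
    intro i hi
    rw [Finset.mem_Icc] at hi
    have hid : i ≤ d := by omega
    by_cases hl : ℓ ≤ i
    · have hTi : T i = ((Finset.univ.filter (fun τ₂ : Equiv.Perm (Fin d) =>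
          (Finset.univ.filter fun j : Fin d => (j : ℕ) < i).image τ₂
            = (Finset.univ.filter fun j : Fin d => (j : ℕ) < i).image τ₁)).card : ℝ) := by
        rw [hT]
        simp only [hcond, hl, true_and]
        rw [Finset.sum_boole]
      have hcount : T i ≤ ((i.factorial * (d - i).factorial : ℕ) : ℝ) := by
        rw [hTi]
        exact_mod_cast count_perm_image_le _ _ (card_filter_lt d i hid)
          (by rw [Finset.card_image_of_injective _ τ₁.injective, card_filter_lt d i hid])
      have hn : d.factorial = d.choose i * (i.factorial * (d - i).factorial) := by
        rw [← Nat.choose_mul_factorial_mul_factorial hid, Nat.mul_assoc]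
      have hfac : ((d.factorial : ℝ)) = (d.choose i : ℝ) * ((i.factorial * (d - i).factorial : ℕ) : ℝ) := by
        rw [hn]; push_cast; ring
      have hchoosei : 0 < (d.choose i : ℝ) := by
        exact_mod_cast Nat.choose_pos hid
      have hchoosel : 0 < (d.choose ℓ : ℝ) := by
        exact_mod_cast Nat.choose_pos (le_trans hl hid)
      have step : ((d.factorial : ℝ))⁻¹ * T i ≤ ((d.choose i : ℝ))⁻¹ := by
        rw [hfac, mul_inv]
        calc (d.choose i : ℝ)⁻¹ * ((i.factorial * (d - i).factorial : ℕ) : ℝ)⁻¹ * T i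
            ≤ (d.choose i : ℝ)⁻¹ * ((i.factorial * (d - i).factorial : ℕ) : ℝ)⁻¹ *
              ((i.factorial * (d - i).factorial : ℕ) : ℝ) := by
              refine mul_le_mul_of_nonneg_left hcount ?_
              positivity
          _ = (d.choose i : ℝ)⁻¹ := by
              rw [mul_assoc, inv_mul_cancel₀ (by positivity), mul_one]
      refine step.trans ?_
      refine inv_anti₀ hchoosel ?_
      exact_mod_cast choose_mono_of_le_half hl (by omega)
    · have hTi : T i = 0 := by
        rw [hT]
        refine Finset.sum_eq_zero fun τ₂ _ => ?_
        rw [if_neg]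
        rw [hcond]
        tauto
      rw [hTi, mul_zero]
      positivity
  calc (P : ℝ)⁻¹ * ∑ i ∈ Finset.Icc 1 P, ((d.factorial : ℝ))⁻¹ * T i
      ≤ (P : ℝ)⁻¹ * ∑ i ∈ Finset.Icc 1 P, ((d.choose ℓ : ℝ))⁻¹ := by
        refine mul_le_mul_of_nonneg_left (Finset.sum_le_sum hkey) (by positivity)
    _ = ((d.choose ℓ : ℝ))⁻¹ := by
        rw [Finset.sum_const, Nat.card_Icc]
        simp only [Nat.add_sub_cancel, nsmul_eq_mul]
        have hP0 : (P : ℝ) ≠ 0 := Nat.cast_ne_zero.mpr (by omega)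
        rw [← mul_assoc, inv_mul_cancel₀ hP0, one_mul]
end

section
/- Let $h_*(\mathbf{z}) = z_1 + z_1 z_2 z_3$ on $\{+1,-1\}^3$, let $\sigma \in C^2(\mathbb{R})$ with bounded first and second derivatives, and consider the ODE system on $\mathbb{R}^3$: $\dot{u}_i^t = a\, \mathbb{E}_{\mathbf{z}}[h_*(\mathbf{z})\, \sigma'(\langle \mathbf{u}^t, \mathbf{z}\rangle)\, z_i]$ for $i = 1,2,3$, with fixed $a \in \mathbb{R}$ and initial condition $\mathbf{u}^0 = (u_1^0, 0, 0)$. Then $u_2^t = u_3^t = 0$ for all $t \ge 0$ for which the solution exists. -/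
/-- The target `h_*(z) = z₁ + z₁ z₂ z₃` on `{±1}³`. -/
noncomputable def hStar (z : Fin 3 → Bool) : ℝ :=
  sgn (z 0) + sgn (z 0) * sgn (z 1) * sgn (z 2)

lemma abs_sgn (b : Bool) : |sgn b| = 1 := by cases b <;> simp [sgn]

lemma abs_hStar_le (z : Fin 3 → Bool) : |hStar z| ≤ 2 := by
  have := abs_add_le (sgn (z 0)) (sgn (z 0) * sgn (z 1) * sgn (z 2))
  calc |hStar z| ≤ |sgn (z 0)| + |sgn (z 0) * sgn (z 1) * sgn (z 2)| := this
    _ ≤ 2 := by rw [abs_mul, abs_mul, abs_sgn, abs_sgn, abs_sgn]; norm_num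

lemma sum_expand (f : (Fin 3 → Bool) → ℝ) :
    ∑ z : Fin 3 → Bool, f z =
      ∑ b0 : Bool, ∑ b1 : Bool, ∑ b2 : Bool, f ![b0, b1, b2] := by
  rw [← (Fin.consEquiv (fun _ : Fin 3 => Bool)).sum_comp]
  rw [Fintype.sum_prod_type]
  congr 1; ext b0
  rw [← (Fin.consEquiv (fun _ : Fin 2 => Bool)).sum_comp]
  rw [Fintype.sum_prod_type]
  congr 1; ext b1
  rw [← (Fin.consEquiv (fun _ : Fin 1 => Bool)).sum_comp]
  rw [Fintype.sum_prod_type]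
  congr 1; ext b2
  rw [Fintype.sum_unique]
  congr 1

lemma key_cancel (g : ℝ → ℝ) (c : ℝ) (i : Fin 3) (hi : i = 1 ∨ i = 2) :
    ∑ z : Fin 3 → Bool, hStar z * g (c * sgn (z 0)) * sgn (z i) = 0 := by
  rcases hi with hi | hi <;> subst hi <;>
    · rw [sum_expand]
      simp [hStar, sgn, Fintype.sum_bool]

/-- Non-MSP functions trap the gradient flow: for `h_*(z) = z₁ + z₁z₂z₃` and the dynamics
`du_i/dt = a E_z[h_*(z) σ'(⟨u, z⟩) z_i]` with `σ ∈ C²` with bounded first and second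
derivatives and initial condition `u⁰ = (u₁⁰, 0, 0)`, coordinates 2 and 3 stay at zero:
`u₂ᵗ = u₃ᵗ = 0` for all `t ≥ 0`. -/
theorem non_msp_coordinates_stay_zero
    (σ : ℝ → ℝ) (hσ : ContDiff ℝ 2 σ)
    (Cσ : ℝ) (hσ' : ∀ x, |deriv σ x| ≤ Cσ) (hσ'' : ∀ x, |deriv (deriv σ) x| ≤ Cσ)
    (a : ℝ) (u : ℝ → Fin 3 → ℝ)
    (hode : ∀ t ∈ Set.Ici (0 : ℝ), ∀ i : Fin 3,
      HasDerivWithinAt (fun s => u s i)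
        (a * (((8 : ℝ))⁻¹ * ∑ z : Fin 3 → Bool,
          hStar z * deriv σ (∑ j, u t j * sgn (z j)) * sgn (z i)))
        (Set.Ici 0) t)
    (h2 : u 0 1 = 0) (h3 : u 0 2 = 0) :
    ∀ t ∈ Set.Ici (0 : ℝ), u t 1 = 0 ∧ u t 2 = 0 := by
  -- σ' is Cσ-Lipschitz
  have hdiff : Differentiable ℝ (deriv σ) := by
    have h2' : ContDiff ℝ (1 + 1) σ := by rw [one_add_one_eq_two]; exact hσ
    exact ((contDiff_succ_iff_deriv.mp h2').2.2).differentiable one_ne_zero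
  have hlip : ∀ x y : ℝ, |deriv σ x - deriv σ y| ≤ Cσ * |x - y| := by
    intro x y
    have := Convex.norm_image_sub_le_of_norm_deriv_le
      (f := deriv σ) (s := Set.univ) (fun z _ => hdiff z)
      (fun z _ => by simpa using hσ'' z) convex_univ (Set.mem_univ y) (Set.mem_univ x)
    simpa [Real.norm_eq_abs] using this
  -- The key pointwise bound on the vector field for coordinates 1 and 2
  have Fbound : ∀ t, ∀ i : Fin 3, i = 1 ∨ i = 2 →
      |a * (((8 : ℝ))⁻¹ * ∑ z : Fin 3 → Bool,
        hStar z * deriv σ (∑ j, u t j * sgn (z j)) * sgn (z i))| ≤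
      (4 * |a| * Cσ) * max |u t 1| |u t 2| := by
    intro t i hi
    set w := u t with hw
    have split : ∀ z : Fin 3 → Bool,
        hStar z * deriv σ (∑ j, w j * sgn (z j)) * sgn (z i) =
        hStar z * (deriv σ (∑ j, w j * sgn (z j)) - deriv σ (w 0 * sgn (z 0))) * sgn (z i)
          + hStar z * deriv σ (w 0 * sgn (z 0)) * sgn (z i) := by
      intro z; ring
    rw [Finset.sum_congr rfl (fun z _ => split z), Finset.sum_add_distrib,
      key_cancel (deriv σ) (w 0) i hi, add_zero]
    have term_bound : ∀ z : Fin 3 → Bool,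
        |hStar z * (deriv σ (∑ j, w j * sgn (z j)) - deriv σ (w 0 * sgn (z 0))) * sgn (z i)| ≤
        2 * (Cσ * (|w 1| + |w 2|)) := by
      intro z
      rw [abs_mul, abs_mul, abs_sgn, mul_one]
      have hd : |deriv σ (∑ j, w j * sgn (z j)) - deriv σ (w 0 * sgn (z 0))| ≤
          Cσ * (|w 1| + |w 2|) := by
        have h1 := hlip (∑ j, w j * sgn (z j)) (w 0 * sgn (z 0))
        have heq : (∑ j, w j * sgn (z j)) - w 0 * sgn (z 0)
            = w 1 * sgn (z 1) + w 2 * sgn (z 2) := by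
          rw [Fin.sum_univ_three]; ring
        have habs : |(∑ j, w j * sgn (z j)) - w 0 * sgn (z 0)| ≤ |w 1| + |w 2| := by
          rw [heq]
          calc |w 1 * sgn (z 1) + w 2 * sgn (z 2)|
              ≤ |w 1 * sgn (z 1)| + |w 2 * sgn (z 2)| := abs_add_le _ _
            _ = |w 1| + |w 2| := by rw [abs_mul, abs_mul, abs_sgn, abs_sgn, mul_one, mul_one]
        have hCσ : 0 ≤ Cσ := le_trans (abs_nonneg _) (hσ' 0)
        exact h1.trans (by nlinarith [abs_nonneg ((∑ j, w j * sgn (z j)) - w 0 * sgn (z 0))])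
      have hC0 : 0 ≤ Cσ * (|w 1| + |w 2|) :=
        mul_nonneg (le_trans (abs_nonneg _) (hσ' 0))
          (add_nonneg (abs_nonneg _) (abs_nonneg _))
      exact mul_le_mul (abs_hStar_le z) hd (abs_nonneg _) (by norm_num)
    have sum_bound : |∑ z : Fin 3 → Bool,
        hStar z * (deriv σ (∑ j, w j * sgn (z j)) - deriv σ (w 0 * sgn (z 0))) * sgn (z i)| ≤
        8 * (2 * (Cσ * (|w 1| + |w 2|))) := by
      have ha := Finset.abs_sum_le_sum_abs
        (fun z : Fin 3 → Bool =>
          hStar z * (deriv σ (∑ j, w j * sgn (z j)) - deriv σ (w 0 * sgn (z 0))) * sgn (z i))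
        Finset.univ
      have hb := Finset.sum_le_sum (fun z (_ : z ∈ Finset.univ) => term_bound z)
      have hc : ∑ _z : Fin 3 → Bool, 2 * (Cσ * (|w 1| + |w 2|))
          = 8 * (2 * (Cσ * (|w 1| + |w 2|))) := by
        rw [Finset.sum_const, Finset.card_univ]
        norm_num [Fintype.card_fun]
      rw [hc] at hb
      exact ha.trans hb
    have hCσ : 0 ≤ Cσ := le_trans (abs_nonneg _) (hσ' 0)
    have e1 : |w 1| + |w 2| ≤ 2 * max |w 1| |w 2| := by
      have := le_max_left |w 1| |w 2|
      have := le_max_right |w 1| |w 2|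
      linarith
    rw [abs_mul, abs_mul]
    have h8 : |((8 : ℝ))⁻¹| = (8 : ℝ)⁻¹ := by norm_num
    rw [h8]
    refine le_trans (mul_le_mul_of_nonneg_left
      (mul_le_mul_of_nonneg_left sum_bound (by norm_num)) (abs_nonneg a)) ?_
    have hring : |a| * ((8:ℝ)⁻¹ * (8 * (2 * (Cσ * (|w 1| + |w 2|)))))
        = 2 * |a| * Cσ * (|w 1| + |w 2|) := by ring
    rw [hring]
    have step3 : 2 * |a| * Cσ * (|w 1| + |w 2|)
        ≤ 2 * |a| * Cσ * (2 * max |w 1| |w 2|) :=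
      mul_le_mul_of_nonneg_left e1 (by positivity)
    refine step3.trans (le_of_eq ?_)
    ring
  -- Gronwall
  intro t ht
  set K : ℝ := 4 * |a| * Cσ with hK
  set f : ℝ → ℝ × ℝ := fun s => (u s 1, u s 2) with hf
  set f' : ℝ → ℝ × ℝ := fun s =>
    (a * (((8 : ℝ))⁻¹ * ∑ z : Fin 3 → Bool,
        hStar z * deriv σ (∑ j, u s j * sgn (z j)) * sgn (z 1)),
     a * (((8 : ℝ))⁻¹ * ∑ z : Fin 3 → Bool,
        hStar z * deriv σ (∑ j, u s j * sgn (z j)) * sgn (z 2))) with hf'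
  have hcont : ContinuousOn f (Set.Icc 0 t) := by
    apply ContinuousOn.mono (s := Set.Ici 0) _ Set.Icc_subset_Ici_self
    intro s hs
    exact ((hode s hs 1).continuousWithinAt).prodMk ((hode s hs 2).continuousWithinAt)
  have hderiv : ∀ x ∈ Set.Ico (0:ℝ) t, HasDerivWithinAt f (f' x) (Set.Ici x) x := by
    intro x hx
    have hx0 : x ∈ Set.Ici (0:ℝ) := hx.1
    exact (((hode x hx0 1).prodMk (hode x hx0 2)).mono (Set.Ici_subset_Ici.mpr hx.1))
  have hbound : ∀ x ∈ Set.Ico (0:ℝ) t, ‖f' x‖ ≤ K * ‖f x‖ + 0 := by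
    intro x _
    rw [add_zero]
    have h1 := Fbound x 1 (Or.inl rfl)
    have h2 := Fbound x 2 (Or.inr rfl)
    have hnf : ‖f x‖ = max |u x 1| |u x 2| := by
      simp [hf, Prod.norm_def, Real.norm_eq_abs]
    rw [hnf]
    have hn' : ‖f' x‖ = max |(f' x).1| |(f' x).2| := by
      simp only [Prod.norm_def, Real.norm_eq_abs]
    rw [hn']
    exact max_le h1 h2
  have h0 : ‖f 0‖ ≤ 0 := by simp [hf, h2, h3, Prod.norm_def]
  have := norm_le_gronwallBound_of_norm_deriv_right_le hcont hderiv h0 hbound t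
    (Set.mem_Icc.mpr ⟨ht, le_rfl⟩)
  rw [gronwallBound_ε0] at this
  simp only [zero_mul] at this
  have hfz : f t = 0 := by
    have : ‖f t‖ ≤ 0 := this
    simpa using norm_le_zero_iff.mp this
  constructor
  · exact congrArg Prod.fst hfz
  · exact congrArg Prod.snd hfz
end

section
/- Let $q_1,\ldots,q_n : \mathbb{R} \to \mathbb{R}$ be smooth functions, $\nu \in \mathbb{R}$, and define the $n \times n$ matrix $N(a)$ with entries $N_{i,j}(a) = \frac{\partial^{j-1}}{\partial a^{j-1}} \exp(\nu q_i(a))$. Then $\det(N(a)) = \Big(\prod_{i=1}^n \exp(\nu q_i(a))\Big) \det(R(a))$, where $R(a)$ is the matrix defined by $R_{i,1} = 1$ and $R_{i,j+1} = R_{i,j} \cdot \nu q_i'(a) + R_{i,j}'(a)$; moreover, the part of $\det(R(a))$ of degree $\binom{n}{2}$ in $\nu$ (the maximal degree) equals, up to sign, the Vandermonde product $\prod_{1 \le i < i' \le n} (q_i'(a) - q_{i'}'(a))$. -/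
/-- The recursively defined entries `R_{j}` satisfying `R_0 = 1` and
`R_{j+1} = R_j · ν q' + R_j'`, so that `(d/da)^j exp(ν q(a)) = exp(ν q(a)) R_j(a)`. -/
noncomputable def Rfun (q : ℝ → ℝ) (ν : ℝ) : ℕ → ℝ → ℝ
  | 0 => fun _ => 1
  | j + 1 => fun a => Rfun q ν j a * (ν * deriv q a) + deriv (Rfun q ν j) a

noncomputable def Cfun (q : ℝ → ℝ) : ℕ → ℕ → ℝ → ℝ
  | 0, 0 => fun _ => 1
  | 0, _ + 1 => fun _ => 0
  | j + 1, 0 => deriv (Cfun q j 0)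
  | j + 1, k + 1 => fun a => Cfun q j k a * deriv q a + deriv (Cfun q j (k + 1)) a

lemma contDiff_Cfun {q : ℝ → ℝ} (hq : ContDiff ℝ (⊤ : ℕ∞) q) :
    ∀ j k, ContDiff ℝ (⊤ : ℕ∞) (Cfun q j k)
  | 0, 0 => contDiff_const
  | 0, k + 1 => contDiff_const
  | j + 1, 0 => (contDiff_infty_iff_deriv.mp (contDiff_Cfun hq j 0)).2
  | j + 1, k + 1 => by
    show ContDiff ℝ (⊤ : ℕ∞) fun a => Cfun q j k a * deriv q a + deriv (Cfun q j (k + 1)) a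
    exact ((contDiff_Cfun hq j k).mul (contDiff_infty_iff_deriv.mp hq).2).add
      (contDiff_infty_iff_deriv.mp (contDiff_Cfun hq j (k + 1))).2

lemma contDiff_Rfun {q : ℝ → ℝ} (hq : ContDiff ℝ (⊤ : ℕ∞) q) (ν : ℝ) :
    ∀ j, ContDiff ℝ (⊤ : ℕ∞) (Rfun q ν j)
  | 0 => contDiff_const
  | j + 1 => by
    show ContDiff ℝ (⊤ : ℕ∞) fun a => Rfun q ν j a * (ν * deriv q a) + deriv (Rfun q ν j) a
    exact ((contDiff_Rfun hq ν j).mul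
        (contDiff_const.mul (contDiff_infty_iff_deriv.mp hq).2)).add
      (contDiff_infty_iff_deriv.mp (contDiff_Rfun hq ν j)).2

lemma Cfun_eq_zero {q : ℝ → ℝ} : ∀ j k, j < k → Cfun q j k = fun _ => 0
  | 0, k + 1, _ => rfl
  | j + 1, k + 1, h => by
    show (fun a => Cfun q j k a * deriv q a + deriv (Cfun q j (k + 1)) a) = fun _ => 0
    rw [Cfun_eq_zero j k (by omega), Cfun_eq_zero j (k + 1) (by omega)]
    funext a
    simp

lemma Cfun_diag {q : ℝ → ℝ} : ∀ j, ∀ a, Cfun q j j a = (deriv q a) ^ j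
  | 0, a => rfl
  | j + 1, a => by
    show Cfun q j j a * deriv q a + deriv (Cfun q (j) (j + 1)) a = _
    rw [Cfun_diag j a, Cfun_eq_zero j (j + 1) (by omega)]
    simp [pow_succ]

lemma Rfun_eq_sum {q : ℝ → ℝ} (hq : ContDiff ℝ (⊤ : ℕ∞) q) (ν : ℝ) :
    ∀ j, Rfun q ν j = fun a => ∑ k ∈ Finset.range (j + 1), Cfun q j k a * ν ^ k
  | 0 => by funext a; simp [Rfun, Cfun]
  | j + 1 => by
    funext a
    show Rfun q ν j a * (ν * deriv q a) + deriv (Rfun q ν j) a = _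
    rw [Rfun_eq_sum hq ν j]
    have hd : deriv (fun a => ∑ k ∈ Finset.range (j + 1), Cfun q j k a * ν ^ k) a
        = ∑ k ∈ Finset.range (j + 1), deriv (Cfun q j k) a * ν ^ k := by
      rw [deriv_fun_sum (fun k _ => ((contDiff_Cfun hq j k).differentiable (by simp) a).mul_const _)]
      exact Finset.sum_congr rfl fun k _ => by
        rw [deriv_mul_const ((contDiff_Cfun hq j k).differentiable (by simp) a)]
    rw [hd]
    rw [Finset.sum_range_succ' (fun k => Cfun q (j + 1) k a * ν ^ k) (j + 1)]
    have h0 : Cfun q (j + 1) 0 a * ν ^ 0 = deriv (Cfun q j 0) a := by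
      simp [Cfun]
    rw [h0]
    have h1 : ∀ k, Cfun q (j + 1) (k + 1) a
        = Cfun q j k a * deriv q a + deriv (Cfun q j (k + 1)) a := fun k => rfl
    -- LHS: (∑ C j k ν^k) * (ν q') + ∑ (C j k)' ν^k
    rw [Finset.sum_mul]
    rw [Finset.sum_range_succ' (fun k => deriv (Cfun q j k) a * ν ^ k) j]
    have h2 : ∑ k ∈ Finset.range j, deriv (Cfun q j (k + 1)) a * ν ^ (k + 1)
        = ∑ k ∈ Finset.range (j + 1), deriv (Cfun q j (k + 1)) a * ν ^ (k + 1) := by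
      rw [Finset.sum_range_succ, Cfun_eq_zero j (j + 1) (by omega)]
      simp
    rw [h2]
    have h3 : (∑ k ∈ Finset.range (j + 1), Cfun q (j + 1) (k + 1) a * ν ^ (k + 1)) =
        (∑ k ∈ Finset.range (j + 1), Cfun q j k a * ν ^ k * (ν * deriv q a)) +
        ∑ k ∈ Finset.range (j + 1), deriv (Cfun q j (k + 1)) a * ν ^ (k + 1) := by
      rw [← Finset.sum_add_distrib]
      exact Finset.sum_congr rfl fun k _ => by rw [h1]; ring
    rw [h3]
    ring

lemma iteratedDeriv_exp_eq {q : ℝ → ℝ} (hq : ContDiff ℝ (⊤ : ℕ∞) q) (ν : ℝ) :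
    ∀ j, iteratedDeriv j (fun x => Real.exp (ν * q x))
      = fun a => Real.exp (ν * q a) * Rfun q ν j a
  | 0 => by funext a; simp [Rfun]
  | j + 1 => by
    rw [iteratedDeriv_succ, iteratedDeriv_exp_eq hq ν j]
    funext a
    have hq' : HasDerivAt q (deriv q a) a :=
      ((hq.differentiable (by simp)) a).hasDerivAt
    have h1 : HasDerivAt (fun x => Real.exp (ν * q x))
        (Real.exp (ν * q a) * (ν * deriv q a)) a := (hq'.const_mul ν).exp
    have h2 : HasDerivAt (Rfun q ν j) (deriv (Rfun q ν j) a) a :=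
      (((contDiff_Rfun hq ν j).differentiable (by simp)) a).hasDerivAt
    rw [show (fun a => Real.exp (ν * q a) * Rfun q ν j a) = (fun x => Real.exp (ν * q x)) * Rfun q ν j from rfl,
      (h1.mul h2).deriv]
    show _ = Real.exp (ν * q a) *
      (Rfun q ν j a * (ν * deriv q a) + deriv (Rfun q ν j) a)
    ring

lemma coeff_prod_of_natDegree_le' {ι : Type*} (s : Finset ι) (f : ι → Polynomial ℝ)
    (d : ι → ℕ) (h : ∀ i ∈ s, (f i).natDegree ≤ d i) :
    (∏ i ∈ s, f i).coeff (∑ i ∈ s, d i) = ∏ i ∈ s, (f i).coeff (d i) := by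
  classical
  induction s using Finset.induction_on with
  | empty => simp
  | insert b s hne ih =>
    rw [Finset.prod_insert hne, Finset.prod_insert hne, Finset.sum_insert hne,
      Polynomial.coeff_mul_add_eq_of_natDegree_le (h b (Finset.mem_insert_self b s))
        ((Polynomial.natDegree_prod_le s f).trans
          (Finset.sum_le_sum fun i hi => h i (Finset.mem_insert_of_mem hi))),
      ih fun i hi => h i (Finset.mem_insert_of_mem hi)]

/-- Wronskian-type factorization for exponentials of smooth functions: with
`N(a)_{i,j} = (d/da)^{j-1} exp(ν q_i(a))`, one has
`det N(a) = (∏ i exp(ν q_i(a))) det R(a)`; moreover `det R(a)` is a polynomial of degree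
at most `n choose 2` in `ν` whose top (degree `n choose 2`) coefficient is, up to sign,
the Vandermonde product `∏_{i<i'} (q_i'(a) - q_{i'}'(a))`. -/
theorem exp_wronskian_vandermonde (n : ℕ) (q : Fin n → ℝ → ℝ)
    (hq : ∀ i, ContDiff ℝ (⊤ : ℕ∞) (q i)) (a : ℝ) :
    (∀ ν : ℝ,
      Matrix.det (Matrix.of fun i j : Fin n =>
          iteratedDeriv (j : ℕ) (fun x => Real.exp (ν * q i x)) a)
        = (∏ i, Real.exp (ν * q i a)) *
          Matrix.det (Matrix.of fun i j : Fin n => Rfun (q i) ν (j : ℕ) a)) ∧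
    ∃ p : Polynomial ℝ, p.natDegree ≤ n.choose 2 ∧
      (∀ ν : ℝ,
        p.eval ν = Matrix.det (Matrix.of fun i j : Fin n => Rfun (q i) ν (j : ℕ) a)) ∧
      (p.coeff (n.choose 2) =
          ∏ pr ∈ Finset.univ.filter (fun pr : Fin n × Fin n => pr.1 < pr.2),
            (deriv (q pr.1) a - deriv (q pr.2) a) ∨
        p.coeff (n.choose 2) =
          -∏ pr ∈ Finset.univ.filter (fun pr : Fin n × Fin n => pr.1 < pr.2),
            (deriv (q pr.1) a - deriv (q pr.2) a)) := by
  have hq' : ∀ i, ContDiff ℝ (⊤ : ℕ∞) (q i) := fun i => (hq i).of_le (by simp)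
  constructor
  · intro ν
    have hEq : (Matrix.of fun i j : Fin n =>
        iteratedDeriv (j : ℕ) (fun x => Real.exp (ν * q i x)) a)
        = Matrix.of fun i j : Fin n =>
          Real.exp (ν * q i a) * Rfun (q i) ν (j : ℕ) a := by
      ext i j
      show iteratedDeriv (j : ℕ) (fun x => Real.exp (ν * q i x)) a = _
      rw [iteratedDeriv_exp_eq (hq' i) ν (j : ℕ)]
      simp
    rw [hEq]
    exact Matrix.det_mul_column _ _
  · set m := n.choose 2 with hm
    set v : Fin n → ℝ := fun i => deriv (q i) a with hv
    set P : Matrix (Fin n) (Fin n) (Polynomial ℝ) := Matrix.of fun i j : Fin n =>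
      ∑ k ∈ Finset.range ((j : ℕ) + 1),
        Polynomial.C (Cfun (q i) (j : ℕ) k a) * Polynomial.X ^ k with hP
    have hdeg : ∀ i j : Fin n, (P i j).natDegree ≤ (j : ℕ) := by
      intro i j
      show (∑ k ∈ Finset.range ((j : ℕ) + 1),
        Polynomial.C (Cfun (q i) (j : ℕ) k a) * Polynomial.X ^ k).natDegree ≤ (j : ℕ)
      apply Polynomial.natDegree_sum_le_of_forall_le
      intro k hk
      exact (Polynomial.natDegree_C_mul_le _ _).trans
        ((Polynomial.natDegree_X_pow k).le.trans (Nat.lt_succ_iff.mp (Finset.mem_range.mp hk)))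
    have hsum : ∑ i : Fin n, (i : ℕ) = m := by
      rw [Fin.sum_univ_eq_sum_range (fun i => i) n, Finset.sum_range_id, hm,
        Nat.choose_two_right]
    refine ⟨P.det, ?_, ?_, ?_⟩
    · rw [Matrix.det_apply']
      apply Polynomial.natDegree_sum_le_of_forall_le
      intro σ _
      refine Polynomial.natDegree_mul_le.trans ?_
      rw [Polynomial.natDegree_intCast, zero_add]
      exact ((Polynomial.natDegree_prod_le _ _).trans
        (Finset.sum_le_sum fun i _ => hdeg (σ i) i)).trans (le_of_eq hsum)
    · intro ν
      have h2 : (Polynomial.evalRingHom ν).mapMatrix P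
          = Matrix.of fun i j : Fin n => Rfun (q i) ν (j : ℕ) a := by
        ext i j
        simp only [RingHom.mapMatrix_apply, Matrix.map_apply, Matrix.of_apply,
          Polynomial.coe_evalRingHom]
        show Polynomial.eval ν (∑ k ∈ Finset.range ((j : ℕ) + 1),
          Polynomial.C (Cfun (q i) (j : ℕ) k a) * Polynomial.X ^ k) = _
        rw [Rfun_eq_sum (hq' i) ν (j : ℕ), Polynomial.eval_finset_sum]
        simp
      rw [← h2, ← RingHom.map_det]
      rfl
    · have hcoeff : P.det.coeff m = (Matrix.vandermonde v).det := by
        rw [Matrix.det_apply', Matrix.det_apply', Polynomial.finset_sum_coeff]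
        refine Finset.sum_congr rfl fun σ _ => ?_
        have hcast : (((Equiv.Perm.sign σ : ℤ)) : Polynomial ℝ)
            = Polynomial.C (((Equiv.Perm.sign σ : ℤ)) : ℝ) := (map_intCast (Polynomial.C : ℝ →+* Polynomial ℝ) _).symm
        rw [hcast, Polynomial.coeff_C_mul, ← hsum,
          coeff_prod_of_natDegree_le' _ _ _ (fun i _ => hdeg (σ i) i)]
        congr 1
        refine Finset.prod_congr rfl fun i _ => ?_
        rw [Matrix.vandermonde_apply]
        show (∑ k ∈ Finset.range ((i : ℕ) + 1),
          Polynomial.C (Cfun (q (σ i)) (i : ℕ) k a) * Polynomial.X ^ k).coeff (i : ℕ) = _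
        rw [Polynomial.finset_sum_coeff]
        simp only [Polynomial.coeff_C_mul, Polynomial.coeff_X_pow, mul_ite, mul_one, mul_zero]
        rw [Finset.sum_ite_eq (Finset.range ((i : ℕ) + 1)) (i : ℕ)
          (fun k => Cfun (q (σ i)) (i : ℕ) k a)]
        rw [if_pos (Finset.mem_range.mpr (Nat.lt_succ_self _))]
        exact Cfun_diag _ _
      have hvdm : (Matrix.vandermonde v).det
          = ∏ i : Fin n, ∏ j ∈ Finset.Ioi i, (v j - v i) := Matrix.det_vandermonde v
      set T := ∏ pr ∈ Finset.univ.filter (fun pr : Fin n × Fin n => pr.1 < pr.2),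
        (v pr.1 - v pr.2) with hT
      have hTs : T = ∏ i : Fin n, ∏ j ∈ Finset.Ioi i, (v i - v j) := by
        rw [← Finset.prod_sigma Finset.univ (fun i => Finset.Ioi i)
          (fun x => v x.1 - v x.2), hT]
        refine Finset.prod_nbij' (fun pr => ⟨pr.1, pr.2⟩) (fun x => (x.1, x.2)) ?_ ?_ ?_ ?_ ?_
        · intro pr hpr
          simp only [Finset.mem_sigma, Finset.mem_univ, Finset.mem_Ioi, true_and]
          exact (Finset.mem_filter.mp hpr).2
        · intro x hx
          simp only [Finset.mem_filter, Finset.mem_univ, true_and]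
          simpa using (Finset.mem_sigma.mp hx).2
        · intro pr _; rfl
        · intro x _; rfl
        · intro pr _; rfl
      have hTfull : T = (-1 : ℝ) ^ (∑ i : Fin n, (Finset.Ioi i).card)
          * (Matrix.vandermonde v).det := by
        rw [hTs, hvdm, ← Finset.prod_pow_eq_pow_sum, ← Finset.prod_mul_distrib]
        refine Finset.prod_congr rfl fun i _ => ?_
        rw [← Finset.prod_const, ← Finset.prod_mul_distrib]
        exact Finset.prod_congr rfl fun j _ => by ring
      rcases Nat.even_or_odd (∑ i : Fin n, (Finset.Ioi i).card) with he | ho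
      · left
        rw [he.neg_one_pow, one_mul] at hTfull
        rw [hcoeff, ← hTfull]
      · right
        rw [ho.neg_one_pow, neg_one_mul] at hTfull
        rw [hcoeff, hTfull, neg_neg]
end
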